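/- Let 𝒜 be a unital separable C*-algebra. If some non-zero quotient of 𝒜 is a Følner C*-algebra, then 𝒜 is a Følner C*-algebra. That is, if ρ : 𝒜 → ℬ is a surjective unital *-homomorphism onto a Følner C*-algebra ℬ, then 𝒜 is a Følner C*-algebra. -/

import Mathlib

open Filter Topology
open scoped ComplexOrder

noncomputable section

variable {H : Type*} [NormedAddCommGroup H] [InnerProductSpace ℂ H] [CompleteSpace H]

/-- `P` is a finite-rank orthogonal projection on the Hilbert space `H`. -/
def IsFinRankProj (P : H →L[ℂ] H) : Prop :=
  IsIdempotentElem P ∧ IsSelfAdjoint P ∧ FiniteDimensional ℂ (LinearMap.range (P : H →ₗ[ℂ] H))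

/-- The Hilbert–Schmidt norm of an operator, computed with respect to the Hilbert basis `b`
(for Hilbert–Schmidt operators it is independent of the choice of `b`). -/
def hsNorm {ι : Type*} (b : HilbertBasis ι ℂ H) (T : H →L[ℂ] H) : ℝ :=
  Real.sqrt (∑' i, ‖T (b i)‖ ^ 2)

/-- The canonical trace of an operator, computed with respect to the Hilbert basis `b`
(for trace-class operators it is independent of the choice of `b`). -/
def trOp {ι : Type*} (b : HilbertBasis ι ℂ H) (T : H →L[ℂ] H) : ℂ :=
  ∑' i, (inner ℂ (b i) (T (b i)) : ℂ)

/-- `{P n}` is a Følner sequence (of non-zero finite-rank orthogonal projections)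
for the set of operators `S ⊆ L(H)`. -/
def IsFolnerSeq {ι : Type*} (b : HilbertBasis ι ℂ H) (S : Set (H →L[ℂ] H))
    (P : ℕ → H →L[ℂ] H) : Prop :=
  (∀ n, IsFinRankProj (P n) ∧ P n ≠ 0) ∧
  ∀ A ∈ S, Tendsto (fun n => hsNorm b (A * P n - P n * A) / hsNorm b (P n)) atTop (𝓝 0)

/-- A proper Følner sequence: an increasing Følner sequence converging strongly to `1`. -/
def IsProperFolnerSeq {ι : Type*} (b : HilbertBasis ι ℂ H) (S : Set (H →L[ℂ] H))
    (P : ℕ → H →L[ℂ] H) : Prop :=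
  IsFolnerSeq b S P ∧ Monotone (fun n => LinearMap.range (P n : H →ₗ[ℂ] H)) ∧
    ∀ x : H, Tendsto (fun n => P n x) atTop (𝓝 x)

/-- A linear map between unital complex `*`-algebras is completely positive if all its
matrix amplifications map positive elements to positive elements. -/
def IsCP {A B : Type*} [Ring A] [Algebra ℂ A] [StarRing A]
    [Ring B] [Algebra ℂ B] [StarRing B] (φ : A →ₗ[ℂ] B) : Prop :=
  ∀ (n : ℕ) (x : Matrix (Fin n) (Fin n) A),
    (∃ y : Matrix (Fin n) (Fin n) A, x = star y * y) →
      ∃ z : Matrix (Fin n) (Fin n) B, x.map φ = star z * z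

/-- Unital completely positive map. -/
def IsUCP {A B : Type*} [Ring A] [Algebra ℂ A] [StarRing A]
    [Ring B] [Algebra ℂ B] [StarRing B] (φ : A →ₗ[ℂ] B) : Prop :=
  φ 1 = 1 ∧ IsCP φ

/-- The `2`-norm `‖F‖₂ = √(tr(F*F))` on `M_k(ℂ)` associated with the normalized trace `tr`. -/
def l2trNorm {k : ℕ} (F : Matrix (Fin k) (Fin k) ℂ) : ℝ :=
  Real.sqrt ((Matrix.trace (star F * F)).re / k)

/-- The operator (C*-) norm of a complex matrix. -/
def matOpNorm {k : ℕ} (F : Matrix (Fin k) (Fin k) ℂ) : ℝ :=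
  ‖Matrix.toEuclideanCLM (𝕜 := ℂ) F‖

/-- A unital separable C*-algebra is a Følner C*-algebra if it admits a sequence of u.c.p. maps
into matrix algebras which is asymptotically multiplicative in the normalized `2`-norms. -/
def IsFolnerAlgebra (A : Type*) [NormedRing A] [StarRing A] [NormedAlgebra ℂ A] : Prop :=
  ∃ (k : ℕ → ℕ) (φ : ∀ n, A →ₗ[ℂ] Matrix (Fin (k n)) (Fin (k n)) ℂ),
    (∀ n, IsUCP (φ n)) ∧
    ∀ a b : A, Tendsto (fun n => l2trNorm ((φ n) (a * b) - (φ n) a * (φ n) b)) atTop (𝓝 0)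

/-- A proper Følner C*-algebra: the u.c.p. maps can moreover be chosen
asymptotically isometric. -/
def IsProperFolnerAlgebra (A : Type*) [NormedRing A] [StarRing A] [NormedAlgebra ℂ A] : Prop :=
  ∃ (k : ℕ → ℕ) (φ : ∀ n, A →ₗ[ℂ] Matrix (Fin (k n)) (Fin (k n)) ℂ),
    (∀ n, IsUCP (φ n)) ∧
    (∀ a b : A, Tendsto (fun n => l2trNorm ((φ n) (a * b) - (φ n) a * (φ n) b)) atTop (𝓝 0)) ∧
    ∀ a : A, Tendsto (fun n => matOpNorm ((φ n) a)) atTop (𝓝 ‖a‖)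

section CompStarAlgHom

variable {A B C : Type*} [Ring A] [Algebra ℂ A] [StarRing A]
  [Ring B] [Algebra ℂ B] [StarRing B] [Ring C] [Algebra ℂ C] [StarRing C]
  {φ : B →ₗ[ℂ] C}

theorem IsCP.comp_starAlgHom (hφ : IsCP φ) (ρ : A →⋆ₐ[ℂ] B) :
    IsCP (φ.comp ρ.toLinearMap) := by
  rintro n _ ⟨y, rfl⟩
  have hρ : (star y * y).map ρ = star (y.map ρ) * y.map ρ := by
    rw [Matrix.map_mul, Matrix.star_eq_conjTranspose, Matrix.star_eq_conjTranspose,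
      Matrix.conjTranspose_map _ (map_star ρ)]
  obtain ⟨z, hz⟩ := hφ n _ ⟨y.map ρ, hρ⟩
  exact ⟨z, by rw [← hz, Matrix.map_map]; rfl⟩

theorem IsUCP.comp_starAlgHom (hφ : IsUCP φ) (ρ : A →⋆ₐ[ℂ] B) :
    IsUCP (φ.comp ρ.toLinearMap) :=
  ⟨by simpa using hφ.1, hφ.2.comp_starAlgHom ρ⟩

end CompStarAlgHom

theorem isFolnerAlgebra_of_quotient
    {A : Type*} [NormedRing A] [StarRing A] [NormedAlgebra ℂ A]
    {B : Type*} [NormedRing B] [StarRing B] [NormedAlgebra ℂ B]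
    (ρ : A →⋆ₐ[ℂ] B)
    (hB : IsFolnerAlgebra B) :
    IsFolnerAlgebra A := by
  obtain ⟨k, φ, hucp, hmul⟩ := hB
  refine ⟨k, fun n => (φ n).comp ρ.toLinearMap, fun n => (hucp n).comp_starAlgHom ρ,
    fun a b => ?_⟩
  simpa using hmul (ρ a) (ρ b)
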